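/- If π, ρ ∈ NC(n) satisfy d_H(π,ρ) = n−1 (the diameter of the Hasse diagram), then π ∧ ρ = 0_n, π ∨ ρ = 1_n, and |π| + |ρ| = n + 1. -/

import Mathlib

/-- A partition of `{1,...,n}` (modeled as a setoid on `Fin n`) is non-crossing. -/
def IsNoncrossing {n : ℕ} (s : Setoid (Fin n)) : Prop :=
  ∀ a b c d : Fin n, a < b → b < c → c < d → s.r a c → s.r b d → s.r a b

/-- `NC n`: the set of non-crossing partitions of `{1,...,n}`, ordered by reverse
refinement (the order induced from the refinement order on setoids). -/
abbrev NC (n : ℕ) := {s : Setoid (Fin n) // IsNoncrossing s}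

/-- The number of blocks of a partition. -/
noncomputable def blocks {n : ℕ} (s : Setoid (Fin n)) : ℕ := Nat.card (Quotient s)

/-- The Hasse diagram of `NC n`: vertices are non-crossing partitions, edges join
pairs where one covers the other. -/
def hasse (n : ℕ) : SimpleGraph (NC n) where
  Adj x y := x ⋖ y ∨ y ⋖ x
  symm := ⟨fun _ _ h => h.symm⟩
  loopless := ⟨fun x h => lt_irrefl x (h.elim CovBy.lt CovBy.lt)⟩

/-!
Any strict inequality `σ < τ` in `NC n` can be refined by merging the `σ`-blocks of two points
that are consecutive in a block of `τ`: no arc of `σ` separates them, so the merge is again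
non-crossing and has one block less. Hence `σ ≤ τ` are joined in the Hasse diagram by a path of
length `|σ| - |τ|`. Going through `0_n` and through `1_n` gives `d_H(π, ρ) ≤ 2n - |π| - |ρ|`
and `d_H(π, ρ) ≤ |π| + |ρ| - 2`, so distance `n - 1` forces `|π| + |ρ| = n + 1`; going
through `π ∧ ρ` then forces `|π ∧ ρ| = n`, and dually `|π ∨ ρ| = 1`.
-/

open Set

namespace Setoid

variable {α : Type*}

theorem map_of_le_surjective {s t : Setoid α} (h : s ≤ t) : Function.Surjective (map_of_le h) :=
  Quotient.ind fun x => ⟨Quotient.mk s x, rfl⟩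

theorem card_quotient_le_of_le [Finite α] {s t : Setoid α} (h : s ≤ t) :
    Nat.card (Quotient t) ≤ Nat.card (Quotient s) :=
  Nat.card_le_card_of_surjective _ (map_of_le_surjective h)

theorem card_quotient_lt_of_lt [Finite α] {s t : Setoid α} (h : s < t) :
    Nat.card (Quotient t) < Nat.card (Quotient s) := by
  refine (card_quotient_le_of_le h.le).lt_of_ne fun heq => h.not_ge fun x y hxy => ?_
  have hbij := (Nat.bijective_iff_surjective_and_card _).2 ⟨map_of_le_surjective h.le, heq.symm⟩
  exact Quotient.exact (hbij.injective (Quotient.sound hxy))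

def mergeBlocks (s : Setoid α) (c : Set α) : Setoid α where
  r x y := s x y ∨ (∃ z ∈ c, s x z) ∧ ∃ z ∈ c, s y z
  iseqv := by
    have hM {x y : α} (hxy : s x y) : (∃ z ∈ c, s y z) → ∃ z ∈ c, s x z :=
      fun ⟨z, hz, hyz⟩ => ⟨z, hz, s.trans hxy hyz⟩
    refine ⟨fun x => .inl (s.refl x), ?_, ?_⟩
    · rintro x y (hxy | ⟨hx, hy⟩)
      exacts [.inl (s.symm hxy), .inr ⟨hy, hx⟩]
    · rintro x y z (hxy | ⟨hx, hy⟩) (hyz | ⟨hy', hz⟩)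
      · exact .inl (s.trans hxy hyz)
      · exact .inr ⟨hM hxy hy', hz⟩
      · exact .inr ⟨hx, hM (s.symm hyz) hy⟩
      · exact .inr ⟨hx, hz⟩

theorem le_mergeBlocks (s : Setoid α) (c : Set α) : s ≤ s.mergeBlocks c :=
  fun _ _ => .inl

theorem mergeBlocks_le {s t : Setoid α} {a b : α} (hst : s ≤ t) (hab : t a b) :
    s.mergeBlocks {a, b} ≤ t := by
  have hta : ∀ x, (∃ z ∈ ({a, b} : Set α), s x z) → t x a := by
    rintro x ⟨z, rfl | rfl, hxz⟩
    exacts [hst hxz, t.trans (hst hxz) (t.symm hab)]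
  rintro x y (hxy | ⟨hx, hy⟩)
  exacts [hst hxy, t.trans (hta x hx) (t.symm (hta y hy))]

theorem card_quotient_mergeBlocks [Finite α] {s : Setoid α} {a b : α} (hab : ¬ s a b) :
    Nat.card (Quotient s) = Nat.card (Quotient (s.mergeBlocks {a, b})) + 1 := by
  classical
  set u := s.mergeBlocks {a, b}
  have hu : u a b := .inr ⟨⟨a, by simp, s.refl a⟩, ⟨b, by simp, s.refl b⟩⟩
  let f (q : Quotient s) : Option (Quotient u) :=
    if q = Quotient.mk s b then none else some (map_of_le (s.le_mergeBlocks _) q)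
  have hs_of_u {x y : α} (hxb : ¬ s x b) (hyb : ¬ s y b) (hxy : u x y) : s x y := by
    have ha {z : α} (hzb : ¬ s z b) : (∃ w ∈ ({a, b} : Set α), s z w) → s z a := by
      rintro ⟨w, rfl | rfl, h⟩
      exacts [h, absurd h hzb]
    rcases hxy with hxy | ⟨hx, hy⟩
    exacts [hxy, s.trans (ha hxb hx) (s.symm (ha hyb hy))]
  have hfx (x : α) : f (Quotient.mk s x) =
      if s x b then none else some (Quotient.mk u x) := by
    simp only [f, Quotient.eq]; rfl
  have hf : f.Bijective := by
    constructor
    · intro q₁ q₂ h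
      induction q₁, q₂ using Quotient.inductionOn₂ with | h x y => ?_
      rw [hfx, hfx] at h
      refine Quotient.sound ?_
      by_cases hx : s x b <;> by_cases hy : s y b <;>
        simp only [hx, hy, if_true, if_false, reduceCtorEq, Option.some.injEq] at h
      · exact s.trans hx (s.symm hy)
      · exact hs_of_u hx hy (Quotient.exact h)
    · rintro (_ | q)
      · exact ⟨Quotient.mk s b, by rw [hfx, if_pos (s.refl b)]⟩
      induction q using Quotient.ind with | _ x => ?_
      by_cases hxb : s x b
      · refine ⟨Quotient.mk s a, ?_⟩
        rw [hfx, if_neg hab]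
        exact congrArg some (Quotient.sound (u.trans hu (u.symm (s.le_mergeBlocks _ hxb))))
      · exact ⟨Quotient.mk s x, by rw [hfx, if_neg hxb]⟩
  rw [← Finite.card_option, Nat.card_congr (Equiv.ofBijective f hf)]

end Setoid

section

variable {n : ℕ}

theorem blocks_antitone : Antitone (blocks (n := n)) :=
  fun _ _ h => Setoid.card_quotient_le_of_le h

theorem blocks_strictAnti : StrictAnti (blocks (n := n)) :=
  fun _ _ h => Setoid.card_quotient_lt_of_lt h

theorem blocks_bot : blocks (⊥ : Setoid (Fin n)) = n := by
  rw [blocks, Nat.card_congr Setoid.quotientBotEquiv, Nat.card_eq_fintype_card, Fintype.card_fin]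

theorem blocks_le (s : Setoid (Fin n)) : blocks s ≤ n :=
  (blocks_antitone bot_le).trans_eq blocks_bot

theorem blocks_pos (hn : 0 < n) (s : Setoid (Fin n)) : 0 < blocks s :=
  have : Nonempty (Quotient s) := ⟨Quotient.mk s ⟨0, hn⟩⟩
  Nat.card_pos

theorem eq_bot_of_le_blocks {s : Setoid (Fin n)} (h : n ≤ blocks s) : s = ⊥ := by
  by_contra hs
  have := blocks_strictAnti (bot_lt_iff_ne_bot.2 hs)
  rw [blocks_bot] at this
  omega

theorem eq_top_of_blocks_le_one {s : Setoid (Fin n)} (h : blocks s ≤ 1) : s = ⊤ :=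
  Quotient.subsingleton_iff.1 (Finite.card_le_one_iff_subsingleton.1 h)

theorem Setoid.exists_consecutive_rel_not_rel {s t : Setoid (Fin n)} (h : s < t) :
    ∃ a b, a < b ∧ t a b ∧ ¬ s a b ∧ ∀ c ∈ Ioo a b, ¬ t a c := by
  obtain ⟨x, y, htxy, hsxy⟩ : ∃ x y, t x y ∧ ¬ s x y := by
    by_contra! hts
    exact h.not_ge hts
  set S : Set (Fin n × Fin n) := {ab | ab.1 < ab.2 ∧ t ab.1 ab.2 ∧ ¬ s ab.1 ab.2}
  have hS : S.Nonempty := by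
    rcases lt_trichotomy x y with hxy | rfl | hyx
    · exact ⟨(x, y), hxy, htxy, hsxy⟩
    · exact absurd (s.refl x) hsxy
    · exact ⟨(y, x), hyx, t.symm htxy, fun h => hsxy (s.symm h)⟩
  obtain ⟨⟨a, b⟩, ⟨hab, htab, hsab⟩, hmin⟩ :=
    S.exists_min_image (fun ab => (ab.2 : ℕ) - ab.1) S.toFinite hS
  dsimp only at hab htab hsab hmin
  have hshort {x y : Fin n} (hxy : x < y) (htxy : t x y) (hlt : (y : ℕ) - x < b - a) : s x y :=
    by_contra fun hsxy => (hmin (x, y) ⟨hxy, htxy, hsxy⟩).not_gt hlt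
  refine ⟨a, b, hab, htab, hsab, fun c ⟨hac, hcb⟩ htac => hsab ?_⟩
  rw [Fin.lt_def] at hab hac hcb
  exact s.trans (hshort (Fin.lt_def.2 hac) htac (by omega))
    (hshort (Fin.lt_def.2 hcb) (t.trans (t.symm htac) htab) (by omega))

namespace IsNoncrossing

variable {s : Setoid (Fin n)}

theorem bot : IsNoncrossing (⊥ : Setoid (Fin n)) :=
  fun _ _ _ _ hab hbc _ hac _ => absurd (hac : _ = _) (hab.trans hbc).ne

theorem top : IsNoncrossing (⊤ : Setoid (Fin n)) :=
  fun _ _ _ _ _ _ _ _ _ => trivial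

theorem rel_or_mem_Ioo (hs : IsNoncrossing s) {p q e f : Fin n} (hpq : s p q)
    (he : e ∈ Icc p q) (hef : s e f) : s p e ∨ f ∈ Ioo p q := by
  obtain ⟨hpe, heq⟩ := he
  rcases hpe.eq_or_lt with rfl | hpe
  · exact .inl (s.refl p)
  rcases heq.eq_or_lt with rfl | heq
  · exact .inl hpq
  rcases lt_trichotomy f p with hfp | rfl | hpf
  · exact .inl (s.trans (s.symm (hs f p e q hfp hpe heq (s.symm hef) hpq)) (s.symm hef))
  · exact .inl (s.symm hef)
  rcases lt_trichotomy f q with hfq | rfl | hqf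
  · exact .inr ⟨hpf, hfq⟩
  · exact .inl (s.trans hpq (s.symm hef))
  · exact .inl (hs p e q f hpe heq hqf hpq hef)

theorem mergeBlocks (hs : IsNoncrossing s) {c : Set (Fin n)}
    (hc : ∀ p q, s p q → (c ∩ Ioo p q).Nonempty → c ⊆ Icc p q) :
    IsNoncrossing (s.mergeBlocks c) := by
  have key {p q e e' : Fin n} (hpq : s p q) (he : e ∈ Ioo p q) (he' : e' ∉ Icc p q) :
      (∃ z ∈ c, s e z) → (∃ z ∈ c, s e' z) → ∃ z ∈ c, s p z := by
    rintro ⟨α, hα, heα⟩ ⟨β, hβ, he'β⟩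
    rcases hs.rel_or_mem_Ioo hpq (Ioo_subset_Icc_self he) heα with hpe | hαin
    · exact ⟨α, hα, s.trans hpe heα⟩
    by_cases hβin : β ∈ Icc p q
    · rcases hs.rel_or_mem_Ioo hpq hβin (s.symm he'β) with hpβ | he'in
      · exact ⟨β, hβ, hpβ⟩
      · exact absurd (Ioo_subset_Icc_self he'in) he'
    · exact absurd (hc p q hpq ⟨α, hα, hαin⟩ hβ) hβin
  intro w x y z hwx hxy hyz hwy hxz
  rcases hwy with hwy | ⟨hw, hy⟩ <;> rcases hxz with hxz | ⟨hx, hz⟩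
  · exact .inl (hs w x y z hwx hxy hyz hwy hxz)
  · exact .inr ⟨key hwy ⟨hwx, hxy⟩ (fun h => h.2.not_gt hyz) hx hz, hx⟩
  · exact .inr ⟨hw, key hxz ⟨hxy, hyz⟩ (fun h => h.1.not_gt hwx) hy hw⟩
  · exact .inr ⟨hw, hx⟩

theorem pair_subset_Icc_of_consecutive {t : Setoid (Fin n)} (ht : IsNoncrossing t) {a b : Fin n}
    (hab : a < b) (htab : t a b) (hgap : ∀ c ∈ Ioo a b, ¬ t a c) {p q : Fin n} (hpq : t p q)
    (hpair : (({a, b} : Set (Fin n)) ∩ Ioo p q).Nonempty) : {a, b} ⊆ Icc p q := by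
  obtain ⟨x, rfl | rfl, hpx, hxq⟩ := hpair
  · have hbq : b ≤ q := le_of_not_gt fun hqb =>
      hgap q ⟨hxq, hqb⟩ (t.trans (t.symm (ht p x q b hpx hxq hqb hpq htab)) hpq)
    simp only [insert_subset_iff, singleton_subset_iff, mem_Icc]
    exact ⟨⟨hpx.le, hxq.le⟩, (hpx.trans hab).le, hbq⟩
  · have hpa : p ≤ a := le_of_not_gt fun hap =>
      hgap p ⟨hap, hpx⟩ (ht a p x q hap hpx hxq htab hpq)
    simp only [insert_subset_iff, singleton_subset_iff, mem_Icc]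
    exact ⟨⟨hpa, (hab.trans hxq).le⟩, hpx.le, hxq.le⟩

end IsNoncrossing

namespace NC

theorem covBy_of_blocks_eq_add_one {v u : NC n} (h : v ≤ u) (hb : blocks v.1 = blocks u.1 + 1) :
    v ⋖ u := by
  refine ⟨h.lt_of_ne ?_, fun c hvc hcu => ?_⟩
  · rintro rfl
    omega
  · have := blocks_strictAnti (show v.1 < c.1 from hvc)
    have := blocks_strictAnti (show c.1 < u.1 from hcu)
    omega

theorem exists_covBy_le_of_lt {v s : NC n} (h : v < s) :
    ∃ u : NC n, v ⋖ u ∧ u ≤ s ∧ blocks v.1 = blocks u.1 + 1 := by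
  obtain ⟨a, b, hab, hsab, hvab, hgap⟩ :=
    Setoid.exists_consecutive_rel_not_rel (show v.1 < s.1 from h)
  let u : NC n := ⟨v.1.mergeBlocks {a, b}, v.2.mergeBlocks fun p q hpq =>
    s.2.pair_subset_Icc_of_consecutive hab hsab hgap (h.le hpq)⟩
  have hb : blocks v.1 = blocks u.1 + 1 := Setoid.card_quotient_mergeBlocks hvab
  exact ⟨u, covBy_of_blocks_eq_add_one (v.1.le_mergeBlocks _) hb,
    Setoid.mergeBlocks_le h.le hsab, hb⟩

theorem exists_hasse_walk_of_le {v s : NC n} (h : v ≤ s) :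
    ∃ p : (hasse n).Walk v s, p.length = blocks v.1 - blocks s.1 := by
  rcases h.eq_or_lt with rfl | hlt
  · exact ⟨.nil, by simp⟩
  obtain ⟨u, hvu, hus, hb⟩ := exists_covBy_le_of_lt hlt
  have := blocks_antitone (show u.1 ≤ s.1 from hus)
  obtain ⟨p, hp⟩ := exists_hasse_walk_of_le hus
  have hadj : (hasse n).Adj v u := .inl hvu
  exact ⟨.cons hadj p, by rw [SimpleGraph.Walk.length_cons, hp]; omega⟩
termination_by blocks v.1 - blocks s.1
decreasing_by
  have := blocks_antitone (show u.1 ≤ s.1 from hus)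
  omega

theorem hasse_dist_le_of_mem_lowerBounds {x y m : NC n} (hm : m ∈ lowerBounds {x, y}) :
    (hasse n).dist x y ≤ (blocks m.1 - blocks x.1) + (blocks m.1 - blocks y.1) := by
  obtain ⟨p, hp⟩ := exists_hasse_walk_of_le (hm (mem_insert x {y}))
  obtain ⟨q, hq⟩ := exists_hasse_walk_of_le (hm (mem_insert_of_mem x rfl))
  simpa [hp, hq] using SimpleGraph.dist_le (p.reverse.append q)

theorem hasse_dist_le_of_mem_upperBounds {x y j : NC n} (hj : j ∈ upperBounds {x, y}) :
    (hasse n).dist x y ≤ (blocks x.1 - blocks j.1) + (blocks y.1 - blocks j.1) := by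
  obtain ⟨p, hp⟩ := exists_hasse_walk_of_le (hj (mem_insert x {y}))
  obtain ⟨q, hq⟩ := exists_hasse_walk_of_le (hj (mem_insert_of_mem x rfl))
  simpa [hp, hq] using SimpleGraph.dist_le (p.append q.reverse)

end NC

end

/-- If `d_H(π,ρ) = n - 1` then `π ∧ ρ = 0_n` (the meet is the minimum of `NC n`),
`π ∨ ρ = 1_n` (the join is the maximum of `NC n`), and `|π| + |ρ| = n + 1`. -/
theorem diameter_pair (n : ℕ) (hn : 1 ≤ n) (π ρ : NC n)
    (h : (hasse n).dist π ρ = n - 1) :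
    (∀ m : NC n, IsGLB {π, ρ} m → ∀ θ : NC n, m ≤ θ) ∧
    (∀ j : NC n, IsLUB {π, ρ} j → ∀ θ : NC n, θ ≤ j) ∧
    blocks π.1 + blocks ρ.1 = n + 1 := by
  have hπ₀ := blocks_pos hn π.1
  have hρ₀ := blocks_pos hn ρ.1
  have hπn := blocks_le π.1
  have hρn := blocks_le ρ.1
  have hbot := NC.hasse_dist_le_of_mem_lowerBounds (x := π) (y := ρ) (m := ⟨⊥, .bot⟩)
    fun θ _ => bot_le (a := θ.1)
  have htop := NC.hasse_dist_le_of_mem_upperBounds (x := π) (y := ρ) (j := ⟨⊤, .top⟩)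
    fun θ _ => le_top (a := θ.1)
  dsimp only at hbot htop
  have hbotn := blocks_le (⊥ : Setoid (Fin n))
  have htop₀ := blocks_pos hn (⊤ : Setoid (Fin n))
  have hsum : blocks π.1 + blocks ρ.1 = n + 1 := by omega
  refine ⟨fun m hm θ => ?_, fun j hj θ => ?_, hsum⟩
  · have hdist := NC.hasse_dist_le_of_mem_lowerBounds hm.1
    have hm₀ := blocks_pos hn m.1
    have hmn : n ≤ blocks m.1 := by omega
    exact (eq_bot_of_le_blocks hmn).trans_le bot_le
  · have hdist := NC.hasse_dist_le_of_mem_upperBounds hj.1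
    have hjn := blocks_le j.1
    have hj₁ : blocks j.1 ≤ 1 := by omega
    exact (le_top : θ.1 ≤ ⊤).trans_eq (eq_top_of_blocks_le_one hj₁).symm
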